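/- arXiv:1604.06605 — 7 statements merged into one kernel-verified Lean document; each statement's English description precedes it below -/
import Mathlib

section
/- For a text T[0, n−1] with suffix array SA and Burrows-Wheeler transform BWT defined by BWT[i] = T[(SA[i] − 1) mod n], the LF-mapping LF(i) = C[BWT[i]] + rank_BWT(i, BWT[i]) satisfies SA[LF(i)] = (SA[i] − 1) mod n for all i, where C[c] is the number of positions j with BWT[j] < c. -/
/-!
Suffix `p = SA[i] - 1` is `BWT[i] :: suffix SA[i]`, so the suffixes below it are those whose
first character is smaller than `BWT[i]`, and those starting with `BWT[i]` whose tail is below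
suffix `SA[i]`. Reindexing positions `r = SA[j] - 1` by `j`, the first kind are counted by
`C[BWT[i]]` and, since `SA` is sorted, the second kind by `rank_BWT(i, BWT[i])`: by uniqueness of
the terminator, if `T[SA[j] - 1] = T[SA[i] - 1]` then either both or neither of `SA[j], SA[i]` is
`0`, the case where `- 1` wraps around. Again because `SA` is sorted, the number of suffixes below
suffix `p` is its position in `SA`.
-/

open Finset

theorem StrictMono.card_filter_apply_lt {β : Type*} [Preorder β] [DecidableLT β] {n : ℕ}
    {f : Fin n → β} (hf : StrictMono f) (k : Fin n) : #{j | f j < f k} = k := by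
  simp_rw [hf.lt_iff_lt, filter_gt_eq_Iio, Fin.card_Iio]

theorem Fin.val_sub_one_eq_mod {m : ℕ} (q : Fin (m + 1)) :
    ((q - 1 : Fin (m + 1)) : ℕ) = ((q : ℕ) + m) % (m + 1) := by
  rw [Fin.coe_sub_one]
  split_ifs with hq
  · simp [hq]
  · have hq' : (q : ℕ) ≠ 0 := Fin.val_ne_zero_iff.mpr hq
    rw [show (q : ℕ) + m = (q - 1) + (m + 1) by omega, Nat.add_mod_right,
      Nat.mod_eq_of_lt (by omega)]

theorem Fin.sub_one_eq_last_iff {m : ℕ} {q : Fin (m + 1)} : q - 1 = Fin.last m ↔ q = 0 := by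
  rw [Fin.ext_iff, Fin.coe_sub_one, Fin.val_last]
  split_ifs with hq
  · simp [hq]
  · simp only [hq, iff_false]; omega

section Suffix

variable {α : Type*}

def suffix {n : ℕ} (T : Fin n → α) (k : ℕ) : List α := (List.ofFn T).drop k

theorem suffix_eq_cons {n : ℕ} (T : Fin n → α) (q : Fin n) :
    suffix T q = T q :: suffix T (q + 1) := by
  rw [suffix, List.drop_eq_getElem_cons (by simp), List.getElem_ofFn]; rfl

theorem card_filter_suffix_lt [LinearOrder α] {n : ℕ} (T : Fin n → α) (p : Fin n) :
    #{r : Fin n | suffix T r < suffix T p} =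
      #{r | T r < T p} + #{r | T r = T p ∧ suffix T (r + 1) < suffix T (p + 1)} := by
  rw [← card_union_of_disjoint (disjoint_filter.mpr fun r _ hlt heq => hlt.ne heq.1),
    ← filter_or]
  congr! 2 with r
  rw [suffix_eq_cons T r, suffix_eq_cons T p]
  exact List.cons_lt_cons_iff

variable {m : ℕ} (T : Fin (m + 1) → α)

theorem suffix_sub_one_succ {q : Fin (m + 1)} (hq : q ≠ 0) :
    suffix T ((q - 1 : Fin (m + 1)) + 1) = suffix T q := by
  rw [Fin.val_sub_one_of_ne_zero hq, Nat.sub_add_cancel (Nat.pos_of_ne_zero (Fin.val_ne_zero_iff.mpr hq))]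

theorem suffix_sub_one_succ_lt_iff [LinearOrder α]
    (hterm : ∀ j, j ≠ Fin.last m → T (Fin.last m) < T j)
    {q q' : Fin (m + 1)} (h : T (q - 1) = T (q' - 1)) :
    suffix T ((q - 1 : Fin (m + 1)) + 1) < suffix T ((q' - 1 : Fin (m + 1)) + 1) ↔
      suffix T q < suffix T q' := by
  have hzero_iff : ∀ x : Fin (m + 1), x = 0 ↔ T (x - 1) = T (Fin.last m) := fun x => by
    rw [← Fin.sub_one_eq_last_iff]
    refine ⟨fun hx => hx ▸ rfl, fun hx => ?_⟩
    by_contra hne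
    exact (hterm _ hne).ne' hx
  have hzero : q = 0 ↔ q' = 0 := by rw [hzero_iff, hzero_iff q', h]
  by_cases hq : q = 0
  · obtain rfl := hq
    obtain rfl := hzero.mp rfl
    simp
  · rw [suffix_sub_one_succ T hq, suffix_sub_one_succ T (mt hzero.mpr hq)]

end Suffix

theorem val_symm_sub_one_eq_card_add_card {α : Type*} [LinearOrder α] {m : ℕ}
    (T : Fin (m + 1) → α) (SA : Equiv.Perm (Fin (m + 1)))
    (hterm : ∀ j, j ≠ Fin.last m → T (Fin.last m) < T j)
    (hsorted : StrictMono fun j => suffix T (SA j)) (i : Fin (m + 1)) :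
    (SA.symm (SA i - 1) : ℕ) =
      #{j | T (SA j - 1) < T (SA i - 1)} + #{j | j < i ∧ T (SA j - 1) = T (SA i - 1)} := by
  rw [← hsorted.card_filter_apply_lt, Equiv.apply_symm_apply,
    card_equiv SA (t := {r : Fin (m + 1) | suffix T r < suffix T (SA i - 1 : Fin (m + 1))})
      (by simp),
    card_filter_suffix_lt]
  congr 1
  · exact (card_equiv (SA.trans (Equiv.subRight 1)) (by simp)).symm
  · refine (card_equiv (SA.trans (Equiv.subRight 1)) fun j => ?_).symm
    simp only [mem_filter, mem_univ, true_and, Equiv.trans_apply, Equiv.subRight_apply]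
    constructor
    · rintro ⟨hji, heq⟩
      exact ⟨heq, (suffix_sub_one_succ_lt_iff T hterm heq).mpr (hsorted hji)⟩
    · rintro ⟨heq, hlt⟩
      exact ⟨hsorted.lt_iff_lt.mp ((suffix_sub_one_succ_lt_iff T hterm heq).mp hlt), heq⟩

/-- **LF-mapping correctness**: for a text `T[0, n−1]` (whose last character is
a unique smallest terminator) with suffix array `SA` (listing the suffixes in
lexicographic order) and Burrows-Wheeler transform
`BWT[i] = T[(SA[i] − 1) mod n]`, the LF-mapping
`LF(i) = C[BWT[i]] + rank_BWT(i, BWT[i])` satisfies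
`SA[LF(i)] = (SA[i] − 1) mod n` for all `i`, where `C[c] = |{j : BWT[j] < c}|`
and `rank_BWT(i, c)` counts occurrences of `c` in `BWT[0, i−1]`. -/
theorem lf_mapping_correct
    {α : Type*} [LinearOrder α] {n : ℕ} (hn : 0 < n)
    (T : Fin n → α) (SA : Equiv.Perm (Fin n))
    (hterm : ∀ j : Fin n, (j : ℕ) ≠ n - 1 →
      T ⟨n - 1, Nat.sub_lt hn one_pos⟩ < T j)
    (hsorted : ∀ i j : Fin n, i < j →
      List.Lex (· < ·) ((List.ofFn T).drop (SA i)) ((List.ofFn T).drop (SA j)))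
    (BWT : Fin n → α)
    (hBWT : ∀ i : Fin n, BWT i = T ⟨((SA i : ℕ) + (n - 1)) % n, Nat.mod_lt _ hn⟩)
    (C : α → ℕ)
    (hC : ∀ c : α, C c = (Finset.univ.filter (fun j : Fin n => BWT j < c)).card)
    (rank : ℕ → α → ℕ)
    (hrank : ∀ (i : ℕ) (c : α), rank i c =
      (Finset.univ.filter (fun j : Fin n => (j : ℕ) < i ∧ BWT j = c)).card)
    (LF : Fin n → ℕ)
    (hLF : ∀ i : Fin n, LF i = C (BWT i) + rank i (BWT i)) :
    ∀ i : Fin n, ∃ h : LF i < n,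
      (SA ⟨LF i, h⟩ : ℕ) = ((SA i : ℕ) + (n - 1)) % n := by
  intro i
  obtain ⟨m, rfl⟩ := Nat.exists_eq_add_one_of_ne_zero hn.ne'
  have hlast : (⟨m + 1 - 1, Nat.sub_lt hn one_pos⟩ : Fin (m + 1)) = Fin.last m :=
    Fin.ext (Nat.add_sub_cancel m 1)
  have hterm' : ∀ j, j ≠ Fin.last m → T (Fin.last m) < T j := fun j hj =>
    hlast ▸ hterm j (by simpa [Fin.ext_iff] using hj)
  have hBWT' : ∀ j, BWT j = T (SA j - 1) := fun j => by
    rw [hBWT]; exact congrArg T (Fin.ext (by rw [Fin.val_sub_one_eq_mod, Nat.add_sub_cancel]))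
  have hLF' : LF i = SA.symm (SA i - 1) := by
    rw [hLF, hC, hrank]
    simp_rw [hBWT']
    exact (val_symm_sub_one_eq_card_add_card T SA hterm' hsorted i).symm
  refine ⟨hLF' ▸ (SA.symm (SA i - 1)).isLt, ?_⟩
  simp [hLF', Fin.val_sub_one_eq_mod]
end

section
/- In a suffix array, for any pattern string X, the set of indices i such that X is a prefix of the suffix starting at SA[i] forms a contiguous interval of indices. -/
/-- If `X` is a prefix of `A` and of `C`, and `A ≤ B ≤ C` in lexicographic
order, then `X` is a prefix of `B`. -/
lemma prefix_of_lex_sandwich {α : Type*} [LinearOrder α] :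
    ∀ {X A B C : List α}, X <+: A → X <+: C →
      (List.Lex (· < ·) A B ∨ A = B) → (List.Lex (· < ·) B C ∨ B = C) →
      X <+: B := by
  intro X
  induction X with
  | nil => intro A B C _ _ _ _; exact List.nil_prefix
  | cons x X ih =>
    intro A B C hA hC h1 h2
    rcases h1 with h1 | rfl
    · rcases h2 with h2 | rfl
      · obtain ⟨A', rfl⟩ := hA
        obtain ⟨C', rfl⟩ := hC
        cases h1 with
        | rel hxb =>
          exfalso
          cases h2 with
          | rel hbx => exact absurd (lt_trans hxb hbx) (lt_irrefl _)
          | cons _ => exact absurd hxb (lt_irrefl _)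
        | cons hAB =>
          cases h2 with
          | rel hbx => exact absurd hbx (lt_irrefl _)
          | cons hBC =>
            have := ih ⟨A', rfl⟩ ⟨C', rfl⟩ (Or.inl hAB) (Or.inl hBC)
            exact (List.prefix_cons_inj x).mpr this
      · exact hC
    · exact hA

/-- In a suffix array (the suffixes of `T` are pairwise distinct and `SA` lists
their starting positions in lexicographic order), for any pattern string `X`,
the set of indices `i` such that `X` is a prefix of the suffix starting at
`SA[i]` forms a contiguous interval of indices. -/
theorem suffix_array_interval
    {α : Type*} [LinearOrder α] {n : ℕ}
    (T : Fin n → α) (SA : Equiv.Perm (Fin n))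
    (hdistinct : ∀ i j : Fin n,
      (List.ofFn T).drop (i : ℕ) = (List.ofFn T).drop (j : ℕ) → i = j)
    (hsorted : ∀ i j : Fin n, i < j →
      List.Lex (· < ·) ((List.ofFn T).drop (SA i)) ((List.ofFn T).drop (SA j)))
    (X : List α) :
    ∃ a b : ℕ, ∀ i : Fin n,
      X <+: (List.ofFn T).drop (SA i) ↔ a ≤ (i : ℕ) ∧ (i : ℕ) < b := by
  set P : Fin n → Prop := fun i => X <+: (List.ofFn T).drop (SA i) with hP
  by_cases hne : ∃ i, P i
  · classical
    obtain ⟨i0, hi0⟩ := hne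
    have hSne : (Finset.univ.filter P).Nonempty := ⟨i0, by simp [hi0]⟩
    set m := (Finset.univ.filter P).min' hSne with hm
    set M := (Finset.univ.filter P).max' hSne with hM
    have hmP : P m := by
      have := (Finset.univ.filter P).min'_mem hSne
      simpa using this
    have hMP : P M := by
      have := (Finset.univ.filter P).max'_mem hSne
      simpa using this
    refine ⟨(m : ℕ), (M : ℕ) + 1, fun i => ?_⟩
    constructor
    · intro hi
      have hmem : i ∈ Finset.univ.filter P := Finset.mem_filter.mpr ⟨Finset.mem_univ i, hi⟩
      exact ⟨Finset.min'_le _ _ hmem, Nat.lt_succ_of_le (Finset.le_max' _ _ hmem)⟩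
    · rintro ⟨h1, h2⟩
      have hmi : m ≤ i := h1
      have hiM : i ≤ M := Nat.lt_succ_iff.mp h2
      have le1 : List.Lex (· < ·) ((List.ofFn T).drop (SA m)) ((List.ofFn T).drop (SA i)) ∨
          (List.ofFn T).drop (SA m) = (List.ofFn T).drop (SA i) := by
        rcases lt_or_eq_of_le hmi with h | h
        · exact Or.inl (hsorted _ _ h)
        · exact Or.inr (by rw [h])
      have le2 : List.Lex (· < ·) ((List.ofFn T).drop (SA i)) ((List.ofFn T).drop (SA M)) ∨
          (List.ofFn T).drop (SA i) = (List.ofFn T).drop (SA M) := by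
        rcases lt_or_eq_of_le hiM with h | h
        · exact Or.inl (hsorted _ _ h)
        · exact Or.inr (by rw [h])
      exact prefix_of_lex_sandwich hmP hMP le1 le2
  · refine ⟨0, 0, fun i => ?_⟩
    push_neg at hne
    exact iff_of_false (hne i) (by omega)
end

section
/- No false negatives for path graphs: let G' = (V', E') be a path graph of a labeled graph G = (V, E) built from the k-collection S of maximal path labels of G, and let X be a nonempty pattern string containing neither # nor $. Then for every path P in G whose label equals X, the start node of P belongs to locate(X) = ⋃_{v' ∈ find(X)} value(v'), where find(X) is the set of nodes of G' that are start nodes of paths in G' labeled X. -/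
open List

/-- Two strings prefix-match if one is a prefix of the other. -/
def PrefixMatch {α : Type*} (s t : List α) : Prop := s <+: t ∨ t <+: s

/-- A set of strings is prefix-free if no two distinct members prefix-match. -/
def PrefixFree {α : Type*} (K : Set (List α)) : Prop :=
  ∀ s ∈ K, ∀ t ∈ K, s ≠ t → ¬ PrefixMatch s t

/-- String `K` occurs at position `i` of the annotated sequence `s`
(an element of a `k`-collection, pairing each character with the graph node
at that position). -/
def OccAt {α ν : Type*} (s : List (α × ν)) (i : ℕ) (K : List α) : Prop :=
  i + K.length ≤ s.length ∧ ((s.drop i).take K.length).map Prod.fst = K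

/-- An order-`k` path graph built from a `k`-collection `seqs` of annotated
sequences (labels of maximal paths, padded with `#^k` in front and `$^k`
behind, each position annotated with the corresponding node), together with a
prefix-free key set `keys` of substrings of length at most `k` such that every
right-maximal substring of the collection prefix-matches some key and
`$^k` is a key. -/
structure PathGraph (α ν : Type*) (k : ℕ) (hash dollar : α) where
  seqs : Set (List (α × ν))
  keys : Set (List α)
  key_nonempty : ∀ K ∈ keys, K ≠ []
  key_short : ∀ K ∈ keys, K.length ≤ k
  prefixFree : PrefixFree keys
  keys_occur : ∀ K ∈ keys, ∃ s ∈ seqs, ∃ i, OccAt s i K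
  suffixes_covered : ∀ s ∈ seqs, ∀ i < s.length,
      ∃ K ∈ keys, PrefixMatch K ((s.drop i).map Prod.fst)
  dollar_key : List.replicate k dollar ∈ keys
  begins_hash : ∀ s ∈ seqs, (s.map Prod.fst).take k = List.replicate k hash
  ends_dollar : ∀ s ∈ seqs,
      (s.map Prod.fst).drop (s.length - k) = List.replicate k dollar
  no_other_special : ∀ s ∈ seqs, ∀ i, k ≤ i → i < s.length - k →
      ∀ h : i < s.length, (s.get ⟨i, h⟩).1 ≠ hash ∧ (s.get ⟨i, h⟩).1 ≠ dollar

namespace PathGraph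

variable {α ν : Type*} [Inhabited α] {k : ℕ} {hash dollar : α}

/-- The value set of a key: the nodes at positions where the key occurs. -/
def value (G : PathGraph α ν k hash dollar) (K : List α) : Set ν :=
  { v | ∃ s ∈ G.seqs, ∃ i, OccAt s i K ∧ ∃ h : i < s.length, (s.get ⟨i, h⟩).2 = v }

/-- Edges of the path graph: `(K, K')` is an edge when the string
`K[0]·K'` occurs in the collection and prefix-matches `K`. -/
def Edge (G : PathGraph α ν k hash dollar) (K K' : List α) : Prop :=
  K ∈ G.keys ∧ K' ∈ G.keys ∧
  (∃ s ∈ G.seqs, ∃ i, OccAt s i (K.headI :: K')) ∧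
  PrefixMatch K (K.headI :: K')

/-- `find X`: the set of keys that are start nodes of paths of the path graph
whose label (concatenation of first characters of the keys) is `X`. -/
def find (G : PathGraph α ν k hash dollar) (X : List α) : Set (List α) :=
  { K | ∃ P : List (List α), P.Chain' G.Edge ∧ (∀ K' ∈ P, K' ∈ G.keys) ∧
      P.map (fun K' => K'.headI) = X ∧ P.headI = K }

/-- `locate X`: the union of the value sets of the keys matching `X`. -/
def locate (G : PathGraph α ν k hash dollar) (X : List α) : Set ν :=
  ⋃ K ∈ G.find X, G.value K

/-- A path graph is the order-`k` de Bruijn graph of its collection when its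
keys are exactly the `k`-mers occurring in the collection. -/
def IsDeBruijn (G : PathGraph α ν k hash dollar) : Prop :=
  G.keys = { K | K.length = k ∧ ∃ s ∈ G.seqs, ∃ i, OccAt s i K }

/-- Two path graphs are `k`-equivalent if `locate` agrees on all patterns of
length between `1` and `k` over `Σ \ {#, $}`. -/
def KEquiv (G G' : PathGraph α ν k hash dollar) : Prop :=
  ∀ X : List α, X ≠ [] → X.length ≤ k →
    (∀ c ∈ X, c ≠ hash ∧ c ≠ dollar) → G.locate X = G'.locate X

/-- An order-`k` pruned de Bruijn graph: a path graph `k`-equivalent to the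
order-`k` de Bruijn graph of the same collection. -/
def IsPrunedDeBruijn (G : PathGraph α ν k hash dollar) : Prop :=
  ∃ D : PathGraph α ν k hash dollar,
    D.seqs = G.seqs ∧ D.IsDeBruijn ∧ G.KEquiv D

/-- The pruning lemma is applicable: there is a nonempty string `K` that is a
proper prefix of at least one key, such that all keys having `K` as a proper
prefix have identical value sets. -/
def CanPrune (G : PathGraph α ν k hash dollar) : Prop :=
  ∃ K : List α, K ≠ [] ∧
    (∃ K' ∈ G.keys, K <+: K' ∧ K ≠ K') ∧
    (∀ K₁ ∈ G.keys, K <+: K₁ → K ≠ K₁ →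
      ∀ K₂ ∈ G.keys, K <+: K₂ → K ≠ K₂ → G.value K₁ = G.value K₂)

/-- A maximally pruned de Bruijn graph: a pruned de Bruijn graph to which the
pruning lemma cannot be applied any further. -/
def MaximallyPruned (G : PathGraph α ν k hash dollar) : Prop :=
  G.IsPrunedDeBruijn ∧ ¬ G.CanPrune

end PathGraph

/-! A path of `G` occurs in some padded sequence `s` at a position `i` that, since the pattern
avoids `$`, lies left of the `$^k` tail. Every suffix of `s` starting left of the tail is longer
than any key, so some key is a prefix of it; the keys chosen at the consecutive positions of the
occurrence form a path of `G'` spelling the pattern, whose first key occurs at `i`. -/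

section OccAt

variable {α ν : Type*} {s : List (α × ν)} {p : ℕ} {K : List α}

theorem map_fst_drop_eq_cons (hp : p < s.length) :
    (s.drop p).map Prod.fst = s[p].1 :: (s.drop (p + 1)).map Prod.fst := by
  rw [List.drop_eq_getElem_cons hp, List.map_cons]

theorem headI_eq_of_prefix_map_fst_drop [Inhabited α] (hK : K ≠ []) (hp : p < s.length)
    (h : K <+: (s.drop p).map Prod.fst) : K.headI = s[p].1 := by
  obtain ⟨b, t, rfl⟩ := List.exists_cons_of_ne_nil hK
  rw [map_fst_drop_eq_cons hp] at h
  exact (List.cons_prefix_cons.mp h).1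

theorem occAt_map_fst_of_take_eq {l : List (α × ν)} (hp : p ≤ s.length)
    (h : (s.drop p).take l.length = l) : OccAt s p (l.map Prod.fst) := by
  have hlen := congrArg List.length h
  simp only [List.length_take, List.length_drop] at hlen
  refine ⟨by simp only [List.length_map]; omega, ?_⟩
  rw [List.length_map, h]

theorem OccAt.prefix (h : OccAt s p K) : K <+: (s.drop p).map Prod.fst := by
  rw [← h.2]
  exact (List.take_prefix _ _).map _

theorem OccAt.of_prefix (hp : p ≤ s.length) (h : K <+: (s.drop p).map Prod.fst) :
    OccAt s p K := by
  have hlen := h.length_le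
  simp only [List.length_map, List.length_drop] at hlen
  refine ⟨by omega, ?_⟩
  rw [List.map_take, ← List.prefix_iff_eq_take.mp h]

theorem OccAt.fst_getElem (h : OccAt s p K) {j : ℕ} (hj : j < K.length) :
    (s[p + j]'(by have := h.1; omega)).1 = K[j] := by
  have hlen : j < (((s.drop p).take K.length).map Prod.fst).length := by
    have := h.1
    simp only [List.length_map, List.length_take, List.length_drop]
    omega
  simpa using List.getElem_of_eq h.2 hlen

end OccAt

namespace PathGraph

variable {α ν : Type*} {k : ℕ} {hash dollar : α}
  (G : PathGraph α ν k hash dollar) {s : List (α × ν)} {p : ℕ}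

theorem fst_getElem_eq_dollar (hs : s ∈ G.seqs) {q : ℕ} (hkq : s.length - k ≤ q)
    (hq : q < s.length) : s[q].1 = dollar := by
  have hmem : s[q].1 ∈ (s.map Prod.fst).drop (s.length - k) :=
    List.mem_drop_iff_getElem.mpr
      ⟨q - (s.length - k), by simp; omega, by simp [Nat.add_sub_cancel' hkq]⟩
  rw [G.ends_dollar s hs] at hmem
  exact List.eq_of_mem_replicate hmem

theorem exists_key_prefix (hs : s ∈ G.seqs) (hp : p < s.length - k) :
    ∃ K ∈ G.keys, K <+: (s.drop p).map Prod.fst := by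
  obtain ⟨K, hK, hmatch | hmatch⟩ := G.suffixes_covered s hs p (by omega)
  · exact ⟨K, hK, hmatch⟩
  · have := hmatch.length_le.trans (G.key_short K hK)
    simp only [List.length_map, List.length_drop] at this
    omega

variable [Inhabited α]

theorem edge_of_prefix (hs : s ∈ G.seqs) (hp : p < s.length) {K K' : List α}
    (hK : K ∈ G.keys) (hK' : K' ∈ G.keys) (hKp : K <+: (s.drop p).map Prod.fst)
    (hK'p : K' <+: (s.drop (p + 1)).map Prod.fst) : G.Edge K K' := by
  have hstep : K.headI :: K' <+: (s.drop p).map Prod.fst := by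
    rw [map_fst_drop_eq_cons hp, headI_eq_of_prefix_map_fst_drop (G.key_nonempty K hK) hp hKp]
    exact List.cons_prefix_cons.mpr ⟨rfl, hK'p⟩
  exact ⟨hK, hK', ⟨s, hs, p, OccAt.of_prefix hp.le hstep⟩,
    List.prefix_or_prefix_of_prefix hKp hstep⟩

theorem exists_mem_find_prefix (hs : s ∈ G.seqs) :
    ∀ {X : List α} {p : ℕ}, X ≠ [] → X <+: (s.drop p).map Prod.fst →
      p + X.length ≤ s.length - k → ∃ K ∈ G.find X, K <+: (s.drop p).map Prod.fst
  | [], _, hX, _, _ => absurd rfl hX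
  | c :: X, p, _, hXp, hlen => by
    simp only [List.length_cons] at hlen
    have hp : p < s.length := by omega
    obtain ⟨K, hK, hKp⟩ := G.exists_key_prefix hs (p := p) (by omega)
    have hc : K.headI = c :=
      (headI_eq_of_prefix_map_fst_drop (G.key_nonempty K hK) hp hKp).trans
        (headI_eq_of_prefix_map_fst_drop (List.cons_ne_nil c X) hp hXp).symm
    refine ⟨K, ?_, hKp⟩
    by_cases hX : X = []
    · subst hX
      exact ⟨[K], List.isChain_singleton K, by simpa using hK, by simp [hc], rfl⟩
    rw [map_fst_drop_eq_cons hp] at hXp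
    obtain ⟨K', ⟨P, hchain, hkeys, hlabel, hhead⟩, hK'p⟩ :=
      exists_mem_find_prefix hs hX (List.cons_prefix_cons.mp hXp).2 (by omega)
    obtain ⟨K'', P, rfl⟩ :=
      List.exists_cons_of_ne_nil (l := P) (by rintro rfl; exact hX hlabel.symm)
    obtain rfl : K'' = K' := hhead
    refine ⟨K :: K'' :: P, ?_, ?_, by simp [hc, ← hlabel], rfl⟩
    · exact List.isChain_cons_cons.mpr
        ⟨G.edge_of_prefix hs hp hK (hkeys _ List.mem_cons_self) hKp hK'p, hchain⟩
    · simpa [hK] using hkeys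

theorem mem_locate_of_occAt (hs : s ∈ G.seqs) {X : List α} (hocc : OccAt s p X) (hX : X ≠ [])
    (hdollar : dollar ∉ X) (hp : p < s.length) : s[p].2 ∈ G.locate X := by
  have hwindow : p + X.length ≤ s.length - k := by
    by_contra! h
    have hXlen : 0 < X.length := List.length_pos_iff.mpr hX
    have hlast := hocc.fst_getElem (j := X.length - 1) (by omega)
    rw [G.fst_getElem_eq_dollar hs (by omega)] at hlast
    exact hdollar (hlast ▸ List.getElem_mem _)
  obtain ⟨K, hK, hKp⟩ := G.exists_mem_find_prefix hs hX hocc.prefix hwindow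
  exact Set.mem_iUnion₂.mpr ⟨K, hK, s, hs, p, OccAt.of_prefix hp.le hKp, hp, rfl⟩

end PathGraph

/-- **No false negatives** (Lemma 1): if `G'` is a path graph of a labeled
graph `G = (V, E)` built from the `k`-collection of the labels of the maximal
paths of `G` (so that every nonempty path of `G` occurs, together with its
nodes, inside some annotated sequence of the collection), then for every
nonempty pattern `X` over `Σ \ {#, $}`, the start node of every path of `G`
labeled `X` belongs to `locate X`. -/
theorem no_false_negatives
    {α ν V : Type*} [Inhabited α] [Inhabited V] {k : ℕ} {hash dollar : α}
    (G' : PathGraph α ν k hash dollar)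
    (lab : V → α) (E : V → V → Prop) (emb : V → ν)
    (hpaths : ∀ P : List V, P ≠ [] → P.Chain' E →
      ∃ s ∈ G'.seqs, ∃ i : ℕ,
        (s.drop i).take P.length = P.map (fun v => (lab v, emb v)))
    (X : List α) (hX : X ≠ []) (hXc : ∀ c ∈ X, c ≠ hash ∧ c ≠ dollar) :
    ∀ P : List V, P.Chain' E → P.map lab = X →
      emb P.headI ∈ G'.locate X := by
  rintro (_ | ⟨v, P⟩) hchain rfl
  · exact absurd rfl hX
  obtain ⟨s, hs, i, hocc⟩ := hpaths (v :: P) (List.cons_ne_nil v P) hchain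
  have hi : i < s.length := by
    have := congrArg List.length hocc
    simp only [List.length_take, List.length_drop, List.length_map, List.length_cons] at this
    omega
  have hnode : s[i].2 = emb v := by
    rw [List.drop_eq_getElem_cons hi, List.length_cons, List.take_succ_cons, List.map_cons] at hocc
    rw [(List.cons_eq_cons.mp hocc).1]
  have hoccX : OccAt s i ((v :: P).map lab) := by
    rw [← List.length_map (f := fun v => (lab v, emb v))] at hocc
    have h := occAt_map_fst_of_take_eq hi.le hocc
    rwa [List.map_map] at h
  rw [List.headI_cons, ← hnode]
  exact G'.mem_locate_of_occAt hs hoccX hX (fun h => (hXc dollar h).2 rfl) hi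
end

section
/- Context length lemma: let G' = (V', E') be a path graph and X a nonempty pattern string over Σ \ {#, $}. Then there exists a length m (depending on G' and X) such that find(X) consists exactly of all nodes v' ∈ V' for which the prefix X[0, m−1] of X is a prefix of key(v'). -/
open List

/-!
Induction on the pattern. Write `X = x :: Y` and assume `find Y` is the set of keys extending
`W = Y[0, m'−1]`. A key in `find X` starts with `x` and has an edge to a key extending `W`, so it
prefix-matches `x :: W`. Conversely, every key `K` extending `x :: W` is found: at an occurrence
of `K` in the collection, the key that starts one position later is comparable with `W`, and as
`W` extends to a key and keys are prefix-free, it extends `W`. So `find X` is the set of keys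
extending `x :: W`, unless some key `P` is a prefix of `x :: W`, in which case `find X = {P}`,
or `find X` is empty, in which case `m = |X|` works because keys extending `X` are always found.
-/

theorem PrefixMatch.of_prefix_right {α : Type*} {K L P : List α} (h : PrefixMatch K L)
    (hP : P <+: L) : PrefixMatch K P :=
  h.elim (fun h => prefix_or_prefix_of_prefix h hP) fun h => Or.inr (hP.trans h)

namespace PathGraph

section Strings

variable {α ν : Type*}

theorem headI_eq_of_prefixMatch_cons [Inhabited α] {K L : List α} {x : α} (hK : K ≠ [])
    (h : PrefixMatch K (x :: L)) : K.headI = x := by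
  obtain ⟨a, t, rfl⟩ := exists_cons_of_ne_nil hK
  rcases h with h | h <;> simp_all

theorem singleton_prefix_iff_headI_eq [Inhabited α] {K : List α} {x : α} (hK : K ≠ []) :
    [x] <+: K ↔ K.headI = x := by
  obtain ⟨a, t, rfl⟩ := exists_cons_of_ne_nil hK
  simp [eq_comm]

theorem map_fst_drop_eq_cons (s : List (α × ν)) {i : ℕ} (hi : i < s.length) :
    (s.drop i).map Prod.fst = s[i].1 :: (s.drop (i + 1)).map Prod.fst := by
  rw [drop_eq_getElem_cons hi, map_cons]

theorem cons_prefix_map_fst_drop_iff {s : List (α × ν)} {i : ℕ} {x : α} {L : List α} :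
    x :: L <+: (s.drop i).map Prod.fst ↔
      ∃ hi : i < s.length, s[i].1 = x ∧ L <+: (s.drop (i + 1)).map Prod.fst := by
  constructor
  · intro h
    have hi : i < s.length := by
      have := h.length_le
      simp only [length_cons, length_map, length_drop] at this
      omega
    rw [map_fst_drop_eq_cons s hi, cons_prefix_cons] at h
    exact ⟨hi, h.1.symm, h.2⟩
  · rintro ⟨hi, rfl, h⟩
    rw [map_fst_drop_eq_cons s hi]
    exact cons_prefix_cons.2 ⟨rfl, h⟩

theorem occAt_iff_prefix {s : List (α × ν)} {i : ℕ} {K : List α} (hK : K ≠ []) :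
    OccAt s i K ↔ K <+: (s.drop i).map Prod.fst := by
  rw [prefix_iff_eq_take, ← map_take, OccAt, eq_comm]
  refine ⟨And.right, fun h => ⟨?_, h⟩⟩
  have hlen := congrArg length h
  have hpos := length_pos_iff.2 hK
  simp only [length_map, length_take, length_drop] at hlen
  omega

end Strings

variable {α ν : Type*} {k : ℕ} {hash dollar : α}

theorem k_ne_zero (G : PathGraph α ν k hash dollar) : k ≠ 0 := by
  rintro rfl
  exact G.key_nonempty [] G.dollar_key rfl

variable (G : PathGraph α ν k hash dollar)

def keysWithPrefix (W : List α) : Set (List α) :=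
  { K | K ∈ G.keys ∧ W <+: K }

theorem eq_of_prefixMatch {K₁ K₂ : List α} (h₁ : K₁ ∈ G.keys) (h₂ : K₂ ∈ G.keys)
    (h : PrefixMatch K₁ K₂) : K₁ = K₂ := by
  by_contra hne
  exact G.prefixFree K₁ h₁ K₂ h₂ hne h

theorem add_lt_length_of_ne_dollar {s : List (α × ν)} (hs : s ∈ G.seqs) {i : ℕ}
    (hi : i < s.length) (hd : s[i].1 ≠ dollar) : i + k < s.length := by
  by_contra h
  have hmem : s[i].1 ∈ (s.map Prod.fst).drop (s.length - k) := by
    rw [mem_iff_getElem]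
    refine ⟨i - (s.length - k), by simp only [length_drop, length_map]; omega, ?_⟩
    simp only [getElem_drop, getElem_map]
    congr 2
    omega
  rw [G.ends_dollar s hs] at hmem
  exact hd (eq_of_mem_replicate hmem)

/-- A suffix of length at least `k` cannot be a proper prefix of a key. -/
theorem exists_key_prefix_of_add_le {s : List (α × ν)} (hs : s ∈ G.seqs) {i : ℕ}
    (h : i + k ≤ s.length) : ∃ K ∈ G.keys, K <+: (s.drop i).map Prod.fst := by
  obtain ⟨K, hK, hmatch⟩ := G.suffixes_covered s hs i (by have := G.k_ne_zero; omega)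
  refine ⟨K, hK, hmatch.elim id fun hsK => ?_⟩
  have hshort := G.key_short K hK
  rw [hsK.eq_of_length_le (by simp only [length_map, length_drop]; omega)]

theorem exists_key_prefix_succ_of_ne_dollar {s : List (α × ν)} (hs : s ∈ G.seqs) {i : ℕ}
    (hi : i < s.length) (hd : s[i].1 ≠ dollar) :
    ∃ K ∈ G.keys, K <+: (s.drop (i + 1)).map Prod.fst :=
  G.exists_key_prefix_of_add_le hs (by have := G.add_lt_length_of_ne_dollar hs hi hd; omega)

variable [Inhabited α]

theorem mem_keys_of_mem_find {X : List α} (hX : X ≠ []) {K : List α} (hK : K ∈ G.find X) :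
    K ∈ G.keys := by
  obtain ⟨_ | ⟨K, P⟩, -, hkeys, hmap, rfl⟩ := hK
  · exact absurd hmap.symm hX
  · exact hkeys K mem_cons_self

theorem find_singleton (x : α) : G.find [x] = G.keysWithPrefix [x] := by
  ext K
  constructor
  · rintro ⟨_ | ⟨K, _ | ⟨K', P⟩⟩, -, hkeys, hmap, rfl⟩ <;> simp only [map_cons, map_nil,
      reduceCtorEq, cons.injEq, and_false] at hmap
    have hK := hkeys K mem_cons_self
    exact ⟨hK, (singleton_prefix_iff_headI_eq (G.key_nonempty K hK)).2 hmap.1⟩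
  · rintro ⟨hK, hxK⟩
    refine ⟨[K], isChain_singleton K, by simpa using hK, ?_, rfl⟩
    simp [(singleton_prefix_iff_headI_eq (G.key_nonempty K hK)).1 hxK]

theorem mem_find_cons {x : α} {Y : List α} (hY : Y ≠ []) {K : List α} :
    K ∈ G.find (x :: Y) ↔ K ∈ G.keys ∧ K.headI = x ∧ ∃ K' ∈ G.find Y, G.Edge K K' := by
  constructor
  · rintro ⟨_ | ⟨K, _ | ⟨K', P⟩⟩, hchain, hkeys, hmap, rfl⟩
    · simp at hmap
    · simp only [map_cons, map_nil, cons.injEq] at hmap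
      exact absurd hmap.2.symm hY
    · simp only [map_cons, cons.injEq] at hmap
      replace hchain := isChain_cons_cons.1 hchain
      exact ⟨hkeys K mem_cons_self, hmap.1, K',
        ⟨K' :: P, hchain.2, fun L hL => hkeys L (mem_cons_of_mem K hL), by simp [hmap.2], rfl⟩,
        hchain.1⟩
  · rintro ⟨hK, rfl, K', ⟨_ | ⟨K', P⟩, hchain, hkeys, hmap, rfl⟩, hedge⟩
    · exact absurd hmap.symm hY
    refine ⟨K :: K' :: P, isChain_cons_cons.2 ⟨hedge, hchain⟩, ?_, by simp [← hmap], rfl⟩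
    rintro L (_ | ⟨_, hL⟩)
    exacts [hK, hkeys L hL]

theorem mem_find_cons_of_prefix_drop {s : List (α × ν)} (hs : s ∈ G.seqs) {i : ℕ}
    {x : α} {Y K K₁ : List α} (hY : Y ≠ []) (hK : K ∈ G.keys) (hK₁ : K₁ ∈ G.find Y)
    (hKs : K <+: (s.drop i).map Prod.fst) (hK₁s : x :: K₁ <+: (s.drop i).map Prod.fst) :
    K ∈ G.find (x :: Y) := by
  have hx : K.headI = x :=
    headI_eq_of_prefixMatch_cons (G.key_nonempty K hK) (prefix_or_prefix_of_prefix hKs hK₁s)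
  subst hx
  exact (G.mem_find_cons hY).2 ⟨hK, rfl, K₁, hK₁, hK, G.mem_keys_of_mem_find hY hK₁,
    ⟨s, hs, i, (occAt_iff_prefix (cons_ne_nil _ _)).2 hK₁s⟩, prefix_or_prefix_of_prefix hKs hK₁s⟩

/-- Paths of the collection are paths of the graph. -/
theorem mem_find_of_prefix {X : List α} (hX : X ≠ []) (hXd : ∀ c ∈ X, c ≠ dollar)
    {s : List (α × ν)} (hs : s ∈ G.seqs) {i : ℕ} (hXs : X <+: (s.drop i).map Prod.fst)
    {K : List α} (hK : K ∈ G.keys) (hKs : K <+: (s.drop i).map Prod.fst) : K ∈ G.find X := by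
  induction X generalizing i K with
  | nil => contradiction
  | cons x Y ih =>
    obtain ⟨hi, rfl, hYs⟩ := cons_prefix_map_fst_drop_iff.1 hXs
    rcases eq_or_ne Y [] with rfl | hY
    · have hKne := G.key_nonempty K hK
      rw [find_singleton]
      exact ⟨hK, (singleton_prefix_iff_headI_eq hKne).2
        (headI_eq_of_prefixMatch_cons hKne (prefix_or_prefix_of_prefix hKs hXs))⟩
    obtain ⟨K₁, hK₁, hK₁s⟩ :=
      G.exists_key_prefix_succ_of_ne_dollar hs hi (hXd _ mem_cons_self)
    have hK₁Y := ih hY (fun c hc => hXd c (mem_cons_of_mem _ hc)) hYs hK₁ hK₁s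
    exact G.mem_find_cons_of_prefix_drop hs hY hK hK₁Y hKs
      (cons_prefix_map_fst_drop_iff.2 ⟨hi, rfl, hK₁s⟩)

theorem keysWithPrefix_subset_find {X : List α} (hX : X ≠ []) (hXd : ∀ c ∈ X, c ≠ dollar) :
    G.keysWithPrefix X ⊆ G.find X := by
  rintro K ⟨hK, hXK⟩
  obtain ⟨s, hs, i, hocc⟩ := G.keys_occur K hK
  have hKs := (occAt_iff_prefix (G.key_nonempty K hK)).1 hocc
  exact G.mem_find_of_prefix hX hXd hs (hXK.trans hKs) hK hKs

section Extension

variable {x : α} {Y W : List α} (hY : Y ≠ []) (hfind : G.find Y = G.keysWithPrefix W)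
include hY hfind

theorem prefixMatch_cons_of_mem_find_cons {K : List α} (hK : K ∈ G.find (x :: Y)) :
    PrefixMatch K (x :: W) := by
  obtain ⟨-, hx, K', hK', -, -, -, hmatch⟩ := (G.mem_find_cons hY).1 hK
  rw [hx] at hmatch
  exact hmatch.of_prefix_right (cons_prefix_cons.2 ⟨rfl, (hfind ▸ hK').2⟩)

theorem mem_find_cons_of_prefix_cons (hne : (G.find (x :: Y)).Nonempty) {K : List α}
    (hK : K ∈ G.keys) (hKW : K <+: x :: W) : K ∈ G.find (x :: Y) := by
  obtain ⟨K₀, hK₀⟩ := hne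
  obtain ⟨-, hx, K', hK', -, -, ⟨s, hs, i, hocc⟩, -⟩ := (G.mem_find_cons hY).1 hK₀
  rw [hx] at hocc
  have hK's := (occAt_iff_prefix (cons_ne_nil _ _)).1 hocc
  have hWK' : x :: W <+: x :: K' := cons_prefix_cons.2 ⟨rfl, (hfind ▸ hK').2⟩
  exact G.mem_find_cons_of_prefix_drop hs hY hK hK' (hKW.trans (hWK'.trans hK's)) hK's

theorem mem_find_cons_of_cons_prefix (hx : x ≠ dollar) (hne : (G.find Y).Nonempty)
    {K : List α} (hK : K ∈ G.keys) (hWK : x :: W <+: K) : K ∈ G.find (x :: Y) := by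
  obtain ⟨K', hK'⟩ := hne
  rw [hfind] at hK'
  obtain ⟨s, hs, i, hocc⟩ := G.keys_occur K hK
  have hKs := (occAt_iff_prefix (G.key_nonempty K hK)).1 hocc
  obtain ⟨hi, hsx, hWs⟩ := cons_prefix_map_fst_drop_iff.1 (hWK.trans hKs)
  obtain ⟨K₁, hK₁, hK₁s⟩ := G.exists_key_prefix_succ_of_ne_dollar hs hi (hsx ▸ hx)
  have hWK₁ : W <+: K₁ := by
    rcases prefix_or_prefix_of_prefix hWs hK₁s with h | h
    · exact h
    · rw [G.eq_of_prefixMatch hK₁ hK'.1 (Or.inl (h.trans hK'.2))]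
      exact hK'.2
  exact G.mem_find_cons_of_prefix_drop hs hY hK (hfind ▸ ⟨hK₁, hWK₁⟩) hKs
    (cons_prefix_map_fst_drop_iff.2 ⟨hi, hsx, hK₁s⟩)

theorem find_cons_eq_keysWithPrefix_of_prefix (hne : (G.find (x :: Y)).Nonempty)
    {P : List α} (hP : P ∈ G.keys) (hPW : P <+: x :: W) :
    G.find (x :: Y) = G.keysWithPrefix P := by
  ext K
  constructor
  · intro hK
    have hKP := G.eq_of_prefixMatch (G.mem_keys_of_mem_find (cons_ne_nil _ _) hK) hP
      ((G.prefixMatch_cons_of_mem_find_cons hY hfind hK).of_prefix_right hPW)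
    exact ⟨hKP ▸ hP, hKP ▸ prefix_rfl⟩
  · rintro ⟨hK, hPK⟩
    rw [← G.eq_of_prefixMatch hP hK (Or.inl hPK)]
    exact G.mem_find_cons_of_prefix_cons hY hfind hne hP hPW

theorem find_cons_eq_keysWithPrefix_cons (hx : x ≠ dollar) (hne : (G.find (x :: Y)).Nonempty)
    (hP : ¬ ∃ P ∈ G.keys, P <+: x :: W) :
    G.find (x :: Y) = G.keysWithPrefix (x :: W) := by
  obtain ⟨K₀, hK₀⟩ := hne
  obtain ⟨-, -, K', hK', -⟩ := (G.mem_find_cons hY).1 hK₀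
  ext K
  constructor
  · intro hK
    have hKkeys := G.mem_keys_of_mem_find (cons_ne_nil _ _) hK
    exact ⟨hKkeys, (G.prefixMatch_cons_of_mem_find_cons hY hfind hK).resolve_left
      fun hKW => hP ⟨K, hKkeys, hKW⟩⟩
  · rintro ⟨hK, hWK⟩
    exact G.mem_find_cons_of_cons_prefix hY hfind hx ⟨K', hK'⟩ hK hWK

end Extension

theorem exists_find_cons_eq {x : α} {Y : List α} (hXd : ∀ c ∈ x :: Y, c ≠ dollar)
    (hY : Y ≠ []) {m : ℕ} (hm : m ≤ Y.length) (hfind : G.find Y = G.keysWithPrefix (Y.take m)) :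
    ∃ m' ≤ (x :: Y).length, G.find (x :: Y) = G.keysWithPrefix ((x :: Y).take m') := by
  rcases (G.find (x :: Y)).eq_empty_or_nonempty with hF | hne
  · refine ⟨(x :: Y).length, le_rfl, ?_⟩
    rw [take_length, hF, eq_comm, ← Set.subset_empty_iff, ← hF]
    exact G.keysWithPrefix_subset_find (cons_ne_nil _ _) hXd
  by_cases hP : ∃ P ∈ G.keys, P <+: x :: Y.take m
  · obtain ⟨P, hP, hPW⟩ := hP
    have hPX : P <+: x :: Y := hPW.trans (cons_prefix_cons.2 ⟨rfl, take_prefix _ _⟩)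
    refine ⟨P.length, hPX.length_le, ?_⟩
    rw [← prefix_iff_eq_take.1 hPX]
    exact G.find_cons_eq_keysWithPrefix_of_prefix hY hfind hne hP hPW
  · exact ⟨m + 1, Nat.succ_le_succ hm,
      G.find_cons_eq_keysWithPrefix_cons hY hfind (hXd x mem_cons_self) hne hP⟩

theorem exists_find_eq_keysWithPrefix_take {X : List α} (hX : X ≠ [])
    (hXd : ∀ c ∈ X, c ≠ dollar) :
    ∃ m ≤ X.length, G.find X = G.keysWithPrefix (X.take m) := by
  induction X with
  | nil => contradiction
  | cons x Y ih =>
    rcases eq_or_ne Y [] with rfl | hY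
    · exact ⟨1, le_rfl, G.find_singleton x⟩
    obtain ⟨m, hm, hfind⟩ := ih hY fun c hc => hXd c (mem_cons_of_mem x hc)
    exact G.exists_find_cons_eq hXd hY hm hfind

end PathGraph

/-- **Context length** (Lemma 2): for a path graph `G'` and a nonempty pattern
`X` over `Σ \ {#, $}`, there is a context length `m` (depending on the graph
and the pattern) such that `find X` consists exactly of the keys having
`X[0, m−1]` as a prefix. -/
theorem context_length
    {α ν : Type*} [Inhabited α] {k : ℕ} {hash dollar : α}
    (G' : PathGraph α ν k hash dollar)
    (X : List α) (hX : X ≠ []) (hXc : ∀ c ∈ X, c ≠ hash ∧ c ≠ dollar) :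
    ∃ m ≤ X.length,
      G'.find X = { K | K ∈ G'.keys ∧ X.take m <+: K } :=
  G'.exists_find_eq_keysWithPrefix_take hX fun c hc => (hXc c hc).2
end

section
/- Short keys lemma, part (a): if G' = (V', E') is a path graph such that |key(u')| ≤ |key(v')| + 1 for all edges (u', v') ∈ E', then for every node v' ∈ V' and every character c ∈ Σ, the node v' has at most one predecessor with label c. -/
open List

/-- **Short keys, part (a)** (Lemma 3(a)): if `|key(u')| ≤ |key(v')| + 1` for
all edges `(u', v')` of a path graph, then every node has at most one
predecessor with any given label. -/
theorem short_keys_a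
    {α ν : Type*} [Inhabited α] {k : ℕ} {hash dollar : α}
    (G' : PathGraph α ν k hash dollar)
    (hshort : ∀ K K' : List α, G'.Edge K K' → K.length ≤ K'.length + 1) :
    ∀ (K' : List α) (c : α) (U W : List α),
      G'.Edge U K' → G'.Edge W K' → U.headI = c → W.headI = c → U = W := by
  intro K' c U W hU hW hUc hWc
  have hUpre : U <+: c :: K' := by
    rcases hU.2.2.2 with h | h
    · rwa [hUc] at h
    · have hlen : U.length ≤ (c :: K').length := by
        simpa using hshort U K' hU
      rw [hUc] at h
      exact (h.eq_of_length_le hlen).symm ▸ List.prefix_refl _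
  have hWpre : W <+: c :: K' := by
    rcases hW.2.2.2 with h | h
    · rwa [hWc] at h
    · have hlen : W.length ≤ (c :: K').length := by
        simpa using hshort W K' hW
      rw [hWc] at h
      exact (h.eq_of_length_le hlen).symm ▸ List.prefix_refl _
  by_contra hne
  exact G'.prefixFree U hU.1 W hW.1 hne
    (List.prefix_or_prefix_of_prefix hUpre hWpre)
end

section
/- Short keys lemma, part (b): if G' = (V', E') is a path graph with |key(u')| ≤ |key(v')| + 1 for all edges (u', v') ∈ E', then for every pattern X over Σ \ {#, $} and every node v' ∈ find(X), the key key(v') prefix-matches X (i.e., one of them is a prefix of the other). -/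
open List

private lemma short_keys_aux
    {α ν : Type*} [Inhabited α] {k : ℕ} {hash dollar : α}
    (G' : PathGraph α ν k hash dollar)
    (hshort : ∀ K K' : List α, G'.Edge K K' → K.length ≤ K'.length + 1) :
    ∀ P : List (List α), P.Chain' G'.Edge → (∀ K ∈ P, K ∈ G'.keys) →
      P ≠ [] → PrefixMatch P.headI (P.map (fun K' => K'.headI)) := by
  intro P
  induction P with
  | nil => intro _ _ h; exact absurd rfl h
  | cons K P ih =>
    intro hchain hkeys _
    have hKkey : K ∈ G'.keys := hkeys K (by simp)
    have hKne : K ≠ [] := G'.key_nonempty K hKkey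
    obtain ⟨a, t, rfl⟩ : ∃ a t, K = a :: t := by
      cases K with
      | nil => exact absurd rfl hKne
      | cons a t => exact ⟨a, t, rfl⟩
    cases P with
    | nil =>
      simp only [List.map, List.headI]
      right
      exact ⟨t, rfl⟩
    | cons K' P' =>
      have hedge : G'.Edge (a :: t) K' := (List.isChain_cons_cons.mp hchain).1
      have hchain' : (K' :: P').Chain' G'.Edge := (List.isChain_cons_cons.mp hchain).2
      have hIH : PrefixMatch K' ((K' :: P').map (fun K'' => K''.headI)) :=
        ih hchain' (fun K'' h => hkeys K'' (List.mem_cons_of_mem _ h)) (by simp)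
      have hlen : (a :: t).length ≤ K'.length + 1 := hshort _ _ hedge
      have hpm : PrefixMatch (a :: t) (a :: K') := by
        have := hedge.2.2.2; simpa using this
      set X' := (K' :: P').map (fun K'' => K''.headI) with hX'
      show PrefixMatch (a :: t) (a :: X')
      -- case analysis
      rcases hpm with h1 | h1
      · -- a :: t <+: a :: K', so t <+: K'
        have ht : t <+: K' := (List.cons_prefix_cons.mp h1).2
        rcases hIH with h2 | h2
        · exact Or.inl (List.cons_prefix_cons.mpr ⟨rfl, ht.trans h2⟩)
        · rcases List.prefix_or_prefix_of_prefix ht h2 with h3 | h3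
          · exact Or.inl (List.cons_prefix_cons.mpr ⟨rfl, h3⟩)
          · exact Or.inr (List.cons_prefix_cons.mpr ⟨rfl, h3⟩)
      · -- a :: K' <+: a :: t, so K' <+: t, with length forcing K' = t
        have ht : K' <+: t := (List.cons_prefix_cons.mp h1).2
        have hlen' : t.length ≤ K'.length := by
          simpa using hlen
        have heq : K' = t := ht.eq_of_length_le hlen'
        subst heq
        rcases hIH with h2 | h2
        · exact Or.inl (List.cons_prefix_cons.mpr ⟨rfl, h2⟩)
        · exact Or.inr (List.cons_prefix_cons.mpr ⟨rfl, h2⟩)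

/-- **Short keys, part (b)** (Lemma 3(b)): if `|key(u')| ≤ |key(v')| + 1` for
all edges `(u', v')` of a path graph, then for every pattern `X` over
`Σ \ {#, $}` and every node `K ∈ find X`, the key `K` prefix-matches `X`. -/
theorem short_keys_b
    {α ν : Type*} [Inhabited α] {k : ℕ} {hash dollar : α}
    (G' : PathGraph α ν k hash dollar)
    (hshort : ∀ K K' : List α, G'.Edge K K' → K.length ≤ K'.length + 1)
    (X : List α) (hXc : ∀ c ∈ X, c ≠ hash ∧ c ≠ dollar) :
    ∀ K ∈ G'.find X, PrefixMatch K X := by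
  intro K hK
  obtain ⟨P, hchain, hkeys, hmap, hhead⟩ := hK
  cases P with
  | nil =>
    subst hmap
    rw [← hhead]
    exact Or.inl (List.nil_prefix)
  | cons K₀ P' =>
    have := short_keys_aux G' hshort (K₀ :: P') hchain hkeys (by simp)
    rw [hmap, hhead] at this
    exact this
end

section
/- No short false positives: let G' be an order-k pruned de Bruijn graph of graph G (i.e., a path graph k-equivalent to the order-k de Bruijn graph of G) and let X be a pattern over Σ \ {#, $} with 1 ≤ |X| ≤ k. Then every node v ∈ locate(X) is the start node of a path in G whose label is X. -/
open List

/-! Every key of the de Bruijn graph `D` has length `k`, so an edge `K → K'` makes `K` a prefix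
of `K[0] · K'`; chaining these, the label of a path prefix-matches its first key. Hence for
`|X| ≤ k` each key of `find X` extends `X`, and every element of `locate X` marks an occurrence
of `X` in the collection. Outside the padding the collection runs along nodes and edges of the
underlying graph, so such an occurrence traces a path labelled `X`; `k`-equivalence carries
this from `D` over to `G'`. -/

theorem OccAt.cons_iff {α ν : Type*} {s : List (α × ν)} {i : ℕ} {c : α} {X : List α} :
    OccAt s i (c :: X) ↔ ∃ h : i < s.length, s[i].1 = c ∧ OccAt s (i + 1) X := by
  constructor
  · rintro ⟨hlen, heq⟩
    have hi : i < s.length := by simp at hlen; omega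
    rw [drop_eq_getElem_cons hi] at heq
    simp only [length_cons, take_succ_cons, map_cons, cons.injEq] at heq
    exact ⟨hi, heq.1, by simp at hlen ⊢; omega, heq.2⟩
  · rintro ⟨hi, hc, hlen, heq⟩
    refine ⟨by simp at hlen ⊢; omega, ?_⟩
    rw [drop_eq_getElem_cons hi, length_cons, take_succ_cons, map_cons, hc, heq]

theorem OccAt.of_prefix_s13 {α ν : Type*} {s : List (α × ν)} {i : ℕ} {X K : List α}
    (hK : OccAt s i K) (hXK : X <+: K) : OccAt s i X := by
  obtain ⟨hlen, heq⟩ := hK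
  refine ⟨by have := hXK.length_le; omega, ?_⟩
  rw [← min_eq_left hXK.length_le, ← take_take, map_take, heq, ← prefix_iff_eq_take.mp hXK]

theorem PrefixMatch.prefix_of_length_le {α : Type*} {X K : List α} (h : PrefixMatch X K)
    (hlen : X.length ≤ K.length) : X <+: K :=
  h.elim id fun hKX => (hKX.eq_of_length_le hlen).symm ▸ prefix_refl K

theorem prefixMatch_map_headI_headI {α : Type*} [Inhabited α] {P : List (List α)}
    (hP : P.IsChain fun K K' => K <+: K.headI :: K') :
    PrefixMatch (P.map headI) P.headI := by
  induction P with
  | nil => exact Or.inl nil_prefix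
  | cons K P ih =>
    rcases P with _ | ⟨K', P⟩
    · rcases K with _ | ⟨c, K⟩
      · exact Or.inr nil_prefix
      · exact Or.inl (by simp)
    · obtain ⟨hKK', hP⟩ := isChain_cons_cons.mp hP
      rcases ih hP with hpath | hkey
      · exact prefix_or_prefix_of_prefix (cons_prefix_cons.mpr ⟨rfl, hpath⟩) hKK'
      · exact Or.inr (hKK'.trans (cons_prefix_cons.mpr ⟨rfl, hkey⟩))

namespace PathGraph

variable {α ν : Type*} {k : ℕ} {hash dollar : α} {D : PathGraph α ν k hash dollar}

theorem IsDeBruijn.length_eq (hD : D.IsDeBruijn) {K : List α} (hK : K ∈ D.keys) :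
    K.length = k := by
  rw [hD] at hK
  exact hK.1

variable [Inhabited α]

theorem IsDeBruijn.prefix_of_edge (hD : D.IsDeBruijn) {K K' : List α} (h : D.Edge K K') :
    K <+: K.headI :: K' :=
  h.2.2.2.prefix_of_length_le <| by
    simp [hD.length_eq h.1, hD.length_eq h.2.1]

theorem IsDeBruijn.prefix_of_mem_find (hD : D.IsDeBruijn) {X K : List α} (hK : K ∈ D.find X)
    (hX : X.length ≤ k) : X <+: K := by
  obtain ⟨P, hP, hkeys, rfl, rfl⟩ := hK
  rcases P with _ | ⟨K, P⟩
  · exact nil_prefix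
  · have hpath := prefixMatch_map_headI_headI (hP.imp fun _ _ => hD.prefix_of_edge)
    refine hpath.prefix_of_length_le ?_
    simpa [hD.length_eq (hkeys K mem_cons_self)] using hX

end PathGraph

def FollowsGraph {α ν V : Type*} (hash dollar : α) (lab : V → α) (E : V → V → Prop)
    (emb : V → ν) (s : List (α × ν)) : Prop :=
  ∀ (i : ℕ) (h : i < s.length), s[i].1 ≠ hash → s[i].1 ≠ dollar →
    ∃ v : V, emb v = s[i].2 ∧ lab v = s[i].1 ∧
      ∀ h' : i + 1 < s.length, s[i + 1].1 ≠ dollar → ∃ w : V, emb w = s[i + 1].2 ∧ E v w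

theorem FollowsGraph.exists_isChain {α ν V : Type*} {hash dollar : α} {lab : V → α}
    {E : V → V → Prop} {emb : V → ν} {s : List (α × ν)}
    (hs : FollowsGraph hash dollar lab E emb s) (hemb : Function.Injective emb)
    {X : List α} {i : ℕ} (hX : OccAt s i X) (hXc : ∀ c ∈ X, c ≠ hash ∧ c ≠ dollar) :
    ∃ P : List V, P.IsChain E ∧ P.map lab = X ∧
      ∀ h : i < s.length, ∀ v ∈ P.head?, emb v = s[i].2 := by
  induction X generalizing i with
  | nil => exact ⟨[], isChain_nil, rfl, by simp⟩
  | cons c X ih =>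
    obtain ⟨hi, hc, hX⟩ := OccAt.cons_iff.mp hX
    obtain ⟨hcHash, hcDollar⟩ := hXc c mem_cons_self
    obtain ⟨v, hv, hvlab, hvE⟩ := hs i hi (hc ▸ hcHash) (hc ▸ hcDollar)
    obtain ⟨P, hP, rfl, hhead⟩ := ih hX fun d hd => hXc d (mem_cons_of_mem c hd)
    refine ⟨v :: P, isChain_cons.mpr ⟨fun w' hw => ?_, hP⟩, by rw [map_cons, hvlab, hc], ?_⟩
    · rcases P with _ | ⟨w, P⟩
      · cases hw
      obtain rfl : w = w' := Option.some.inj hw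
      obtain ⟨hi', hlab, -⟩ := OccAt.cons_iff.mp hX
      obtain ⟨w', hw', hE⟩ := hvE hi' (hlab ▸ (hXc (lab w) (by simp)).2)
      rwa [hemb (hw'.trans (hhead hi' w rfl).symm)] at hE
    · rintro - _ ⟨⟩
      exact hv

/-- **No short false positives** (Lemma 4): let `G'` be an order-`k` pruned
de Bruijn graph of a labeled graph `G = (V, E)` (the annotated sequences of the
collection follow, at their non-padding positions, nodes and edges of `G` via
the embedding `emb`), and let `X` be a pattern over `Σ \ {#, $}` with
`1 ≤ |X| ≤ k`. Then every element of `locate X` is (the embedding of) the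
start node of a path of `G` labeled `X`. -/
theorem no_short_false_positives
    {α ν V : Type*} [Inhabited α] [Inhabited V] {k : ℕ} {hash dollar : α}
    (G' : PathGraph α ν k hash dollar) (hG' : G'.IsPrunedDeBruijn)
    (lab : V → α) (E : V → V → Prop) (emb : V → ν)
    (hemb : Function.Injective emb)
    (hseq : ∀ s ∈ G'.seqs, ∀ (i : ℕ) (h : i < s.length),
      (s.get ⟨i, h⟩).1 ≠ hash → (s.get ⟨i, h⟩).1 ≠ dollar →
      ∃ v : V, emb v = (s.get ⟨i, h⟩).2 ∧ lab v = (s.get ⟨i, h⟩).1 ∧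
        ∀ h' : i + 1 < s.length, (s.get ⟨i + 1, h'⟩).1 ≠ dollar →
          ∃ w : V, emb w = (s.get ⟨i + 1, h'⟩).2 ∧ E v w)
    (X : List α) (hX1 : 1 ≤ X.length) (hXk : X.length ≤ k)
    (hXc : ∀ c ∈ X, c ≠ hash ∧ c ≠ dollar) :
    ∀ u ∈ G'.locate X, ∃ v : V, emb v = u ∧
      ∃ P : List V, P.Chain' E ∧ P.map lab = X ∧ P.headI = v := by
  intro u hu
  obtain ⟨D, hseqs, hD, hequiv⟩ := hG'
  have hX : X ≠ [] := ne_nil_of_length_pos hX1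
  rw [hequiv X hX hXk hXc, PathGraph.locate, Set.mem_iUnion₂] at hu
  obtain ⟨K, hK, s, hs, i, hocc, hi, rfl⟩ := hu
  have hfollows : FollowsGraph hash dollar lab E emb s := hseq s (hseqs ▸ hs)
  obtain ⟨P, hP, rfl, hhead⟩ :=
    hfollows.exists_isChain hemb (hocc.of_prefix_s13 (hD.prefix_of_mem_find hK hXk)) hXc
  rcases P with _ | ⟨v, P⟩
  · exact absurd rfl hX
  · exact ⟨v, hhead hi v rfl, v :: P, hP, rfl, rfl⟩
end
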